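/- Let \alpha, \gamma, \mu, \delta, C, C_1, C_2 be positive constants. Define for t \ge 1 the sum S(t) = \sum_{k=0}^{\infty} \min\big(C e^{-\mu t},\; C_1 e^{\alpha t} e^{-\gamma k/t} + C_2 e^{-\delta k}\big). Then S(t) \to 0 as t \to \infty. -/

import Mathlib

/-!
For `0 < θ ≤ 1` one has `min a x ≤ a ^ (1 - θ) * x ^ θ`, and `min a (x + y) ≤ min a x + min a y`.
Applied termwise, these dominate the `k`-th term by
`C^{1-θ} e^{-(1-θ)μt} (C₁^θ e^{θαt} e^{-θγk/t} + C₂^θ e^{-θδk})`, two geometric sequences.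
The first ratio `e^{-θγ/t}` tends to `1`, but `1 - e^{-θγ/t} ≥ θγ/(t + θγ)` only costs a factor
linear in `t`. With `θ = μ / (2(α + μ))` the first prefactor is `e^{-μt/2}`, so
`S(t) = O(t e^{-μt/2})`.
-/

open Filter Real

lemma min_add_le_min_add_min {a x y : ℝ} (ha : 0 ≤ a) (hx : 0 ≤ x) (hy : 0 ≤ y) :
    min a (x + y) ≤ min a x + min a y := by
  simp only [min_def]
  split_ifs <;> linarith

lemma min_le_rpow_mul_rpow {a x θ : ℝ} (ha : 0 ≤ a) (hx : 0 ≤ x) (hθ₀ : 0 ≤ θ) (hθ₁ : θ ≤ 1) :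
    min a x ≤ a ^ (1 - θ) * x ^ θ := by
  have hm : 0 ≤ min a x := le_min ha hx
  calc min a x = min a x ^ (1 - θ) * min a x ^ θ := by
        rw [← rpow_add' hm (by norm_num), sub_add_cancel, rpow_one]
    _ ≤ a ^ (1 - θ) * x ^ θ := by
        gcongr
        exacts [min_le_left _ _, min_le_right _ _]

lemma tsum_min_add_geometric_le {a A B r s θ : ℝ} (ha : 0 ≤ a) (hA : 0 ≤ A) (hB : 0 ≤ B)
    (hr₀ : 0 ≤ r) (hr₁ : r < 1) (hs₀ : 0 ≤ s) (hs₁ : s < 1) (hθ₀ : 0 < θ) (hθ₁ : θ ≤ 1) :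
    ∑' k : ℕ, min a (A * r ^ k + B * s ^ k)
      ≤ a ^ (1 - θ) * (A ^ θ * (1 - r ^ θ)⁻¹ + B ^ θ * (1 - s ^ θ)⁻¹) := by
  have hgeom : ∀ {c q : ℝ}, 0 ≤ c → 0 ≤ q → q < 1 →
      HasSum (fun k : ℕ => c ^ θ * (q ^ θ) ^ k) (c ^ θ * (1 - q ^ θ)⁻¹) := fun hc hq₀ hq₁ =>
    (hasSum_geometric_of_lt_one (rpow_nonneg hq₀ θ) (rpow_lt_one hq₀ hq₁ hθ₀)).mul_left _
  have hmajorant := ((hgeom hA hr₀ hr₁).add (hgeom hB hs₀ hs₁)).mul_left (a ^ (1 - θ))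
  have hterm : ∀ k : ℕ, min a (A * r ^ k + B * s ^ k)
      ≤ a ^ (1 - θ) * (A ^ θ * (r ^ θ) ^ k + B ^ θ * (s ^ θ) ^ k) := fun k => by
    have hx : 0 ≤ A * r ^ k := by positivity
    have hy : 0 ≤ B * s ^ k := by positivity
    calc min a (A * r ^ k + B * s ^ k) ≤ min a (A * r ^ k) + min a (B * s ^ k) :=
          min_add_le_min_add_min ha hx hy
      _ ≤ a ^ (1 - θ) * (A * r ^ k) ^ θ + a ^ (1 - θ) * (B * s ^ k) ^ θ :=
          add_le_add (min_le_rpow_mul_rpow ha hx hθ₀.le hθ₁)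
            (min_le_rpow_mul_rpow ha hy hθ₀.le hθ₁)
      _ = a ^ (1 - θ) * (A ^ θ * (r ^ θ) ^ k + B ^ θ * (s ^ θ) ^ k) := by
          rw [mul_rpow hA (by positivity), mul_rpow hB (by positivity),
            ← rpow_pow_comm hr₀, ← rpow_pow_comm hs₀]
          ring
  exact hasSum_le hterm
    (hmajorant.summable.of_nonneg_of_le (fun k => by positivity) hterm).hasSum hmajorant

lemma one_sub_exp_neg_inv_le {x : ℝ} (hx : 0 < x) : (1 - exp (-x))⁻¹ ≤ 1 + x⁻¹ := by
  have hlower : x / (1 + x) ≤ 1 - exp (-x) := by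
    rw [div_le_iff₀ (by positivity), exp_neg]
    have := add_one_le_exp x
    have hexp := exp_pos x
    field_simp
    nlinarith
  calc (1 - exp (-x))⁻¹ ≤ (x / (1 + x))⁻¹ := inv_anti₀ (by positivity) hlower
    _ = 1 + x⁻¹ := by field_simp; ring

lemma tendsto_affine_mul_exp_neg_mul_atTop (p q : ℝ) {b : ℝ} (hb : 0 < b) :
    Tendsto (fun t : ℝ => (p + q * t) * exp (-b * t)) atTop (nhds 0) := by
  have h₀ := (tendsto_rpow_mul_exp_neg_mul_atTop_nhds_zero 0 b hb).const_mul p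
  have h₁ := (tendsto_rpow_mul_exp_neg_mul_atTop_nhds_zero 1 b hb).const_mul q
  simpa only [rpow_zero, rpow_one, mul_zero, add_zero, one_mul, add_mul, mul_assoc]
    using h₀.add h₁

lemma tsum_min_exp_le {α γ μ δ C C₁ C₂ θ t : ℝ} (hγ : 0 < γ) (hδ : 0 < δ) (hC : 0 ≤ C)
    (hC₁ : 0 ≤ C₁) (hC₂ : 0 ≤ C₂) (hθ₀ : 0 < θ) (hθ₁ : θ ≤ 1) (ht : 0 < t) :
    ∑' k : ℕ, min (C * exp (-μ * t))
        (C₁ * exp (α * t) * exp (-γ * (k : ℝ) / t) + C₂ * exp (-δ * (k : ℝ)))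
      ≤ C ^ (1 - θ) * C₁ ^ θ * (1 + t / (θ * γ)) * exp (-((1 - θ) * μ - θ * α) * t)
        + C ^ (1 - θ) * C₂ ^ θ * (1 - exp (-(θ * δ)))⁻¹ * exp (-((1 - θ) * μ) * t) := by
  have hsummand : ∀ k : ℕ, C₁ * exp (α * t) * exp (-γ * (k : ℝ) / t) + C₂ * exp (-δ * (k : ℝ))
      = C₁ * exp (α * t) * exp (-γ / t) ^ k + C₂ * exp (-δ) ^ k := fun k => by
    rw [← exp_nat_mul, ← exp_nat_mul, mul_div_assoc', mul_comm (k : ℝ), mul_comm (k : ℝ)]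
  have hbound := tsum_min_add_geometric_le (a := C * exp (-μ * t)) (A := C₁ * exp (α * t))
    (by positivity) (by positivity) hC₂ (exp_pos _).le (exp_lt_one_iff.2 (div_neg_of_neg_of_pos (neg_neg_of_pos hγ) ht)) (exp_pos _).le
    (exp_lt_one_iff.2 (neg_neg_of_pos hδ)) hθ₀ hθ₁
  have hratio : (1 - exp (-γ / t) ^ θ)⁻¹ ≤ 1 + t / (θ * γ) := by
    have := one_sub_exp_neg_inv_le (x := θ * γ / t) (by positivity)
    rw [inv_div] at this
    rwa [← exp_mul, show -γ / t * θ = -(θ * γ / t) by ring]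
  have hpow : ∀ {c : ℝ} (x y : ℝ), 0 ≤ c → (c * exp x) ^ y = c ^ y * exp (y * x) :=
    fun x y hc => by rw [mul_rpow hc (exp_pos x).le, ← exp_mul, mul_comm x]
  have hs : exp (-δ) ^ θ = exp (-(θ * δ)) := by rw [← exp_mul]; ring_nf
  rw [hpow _ _ hC, hpow _ _ hC₁, hs] at hbound
  simp only [hsummand]
  calc _ ≤ _ := hbound
    _ ≤ C ^ (1 - θ) * exp ((1 - θ) * (-μ * t))
          * (C₁ ^ θ * exp (θ * (α * t)) * (1 + t / (θ * γ))
            + C₂ ^ θ * (1 - exp (-(θ * δ)))⁻¹) := by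
        gcongr
    _ = _ := by
        have hexp : exp ((1 - θ) * (-μ * t)) * exp (θ * (α * t))
            = exp (-((1 - θ) * μ - θ * α) * t) := by
          rw [← exp_add]; ring_nf
        rw [← hexp, show (1 - θ) * (-μ * t) = -((1 - θ) * μ) * t by ring]
        ring

/-- Let `α, γ, μ, δ, C, C₁, C₂` be positive constants and for `t ≥ 1` set
`S(t) = ∑_{k=0}^∞ min(C e^{-μt}, C₁ e^{αt} e^{-γk/t} + C₂ e^{-δk})`.
Then `S(t) → 0` as `t → ∞`. -/
theorem min_sum_tendsto_zero
    (α γ μ δ C C₁ C₂ : ℝ)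
    (hα : 0 < α) (hγ : 0 < γ) (hμ : 0 < μ) (hδ : 0 < δ)
    (hC : 0 < C) (hC₁ : 0 < C₁) (hC₂ : 0 < C₂) :
    Tendsto
      (fun t : ℝ =>
        ∑' k : ℕ,
          min (C * Real.exp (-μ * t))
            (C₁ * Real.exp (α * t) * Real.exp (-γ * (k : ℝ) / t) + C₂ * Real.exp (-δ * (k : ℝ))))
      atTop (nhds 0) := by
  set θ := μ / (2 * (α + μ))
  have hθ₀ : 0 < θ := by positivity
  have hθ₁ : θ < 1 := by rw [div_lt_one (by positivity)]; linarith
  have hrate : (1 - θ) * μ - θ * α = μ / 2 := by simp only [θ]; field_simp; ring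
  have hmajorant := (tendsto_affine_mul_exp_neg_mul_atTop (C ^ (1 - θ) * C₁ ^ θ)
      (C ^ (1 - θ) * C₁ ^ θ / (θ * γ)) (half_pos hμ)).add
    (tendsto_affine_mul_exp_neg_mul_atTop (C ^ (1 - θ) * C₂ ^ θ * (1 - exp (-(θ * δ)))⁻¹) 0
      (mul_pos (sub_pos.2 hθ₁) hμ))
  rw [add_zero] at hmajorant
  refine tendsto_of_tendsto_of_tendsto_of_le_of_le' tendsto_const_nhds hmajorant
    (Eventually.of_forall fun t => tsum_nonneg fun k => le_min (by positivity) (by positivity)) ?_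
  filter_upwards [eventually_gt_atTop 0] with t ht
  exact (tsum_min_exp_le hγ hδ hC.le hC₁.le hC₂.le hθ₀ hθ₁.le ht).trans_eq (by rw [hrate]; ring)
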